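/- arXiv:1109.1681 — 6 statements merged into one kernel-verified Lean document; each statement's English description precedes it below -/
import Mathlib

section
/- Let F be a finite field and C ⊆ F^n a linear code that is not an orthogonal direct sum, i.e., there is no nontrivial partition of the coordinate set {1,…,n} into parts S and T such that C = (C ∩ F^S) ⊕ (C ∩ F^T), where F^S denotes the vectors supported on S. Then the kernel of the restriction to Mon(C) of the permutational-part homomorphism π : Mon_n(F) → S_n consists exactly of the scalar transformations {α·id : α ∈ F^*}, and is hence isomorphic to F^*. -/
/-!
A diagonal map `x ↦ d * x` preserving `C` also makes every polynomial in it preserve `C`.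
Lagrange interpolation on the finitely many diagonal entries yields a polynomial that is `1`
on the entries equal to `b` and `0` on the others, so the coordinate projection onto
`{i | d i = b}` preserves `C`, which then splits along that set. Since `C` does not split,
the set is everything: `d` is constant.
-/

open Finset

/-- The submodule of vectors of `F^n` supported on the coordinate set `S`. -/
def supportedOn {F : Type*} [Field F] {n : ℕ} (S : Set (Fin n)) :
    Submodule F (Fin n → F) where
  carrier := {x | ∀ i ∉ S, x i = 0}
  add_mem' := by intro a b ha hb i hi; simp [ha i hi, hb i hi]
  zero_mem' := fun i _ => rfl
  smul_mem' := by intro c x hx i hi; simp [hx i hi]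

/-- `C` is an orthogonal direct sum: there is a nontrivial partition `S, Sᶜ` of
the coordinates such that `C = (C ∩ F^S) ⊕ (C ∩ F^(Sᶜ))`. -/
def IsOrthogonalDirectSum {F : Type*} [Field F] {n : ℕ}
    (C : Submodule F (Fin n → F)) : Prop :=
  ∃ S : Set (Fin n), S.Nonempty ∧ S ≠ Set.univ ∧
    C = (C ⊓ supportedOn S) ⊔ (C ⊓ supportedOn Sᶜ)

open Polynomial

theorem Submodule.eval_mul_mem_of_mul_mem {ι R : Type*} [CommRing R]
    {C : Submodule R (ι → R)} {d : ι → R} (hd : ∀ x ∈ C, d * x ∈ C) (p : R[X]) :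
    ∀ x ∈ C, (fun i => p.eval (d i)) * x ∈ C := by
  induction p using Polynomial.induction_on with
  | C a =>
    intro x hx
    simpa [Pi.mul_def, Pi.smul_def] using C.smul_mem a hx
  | add p q hp hq =>
    intro x hx
    rw [show (fun i => (p + q).eval (d i)) = (fun i => p.eval (d i)) + fun i => q.eval (d i)
      from funext fun _ => eval_add, add_mul]
    exact C.add_mem (hp x hx) (hq x hx)
  | monomial k a ih =>
    intro x hx
    have hshift : (fun i => (Polynomial.C a * X ^ (k + 1)).eval (d i)) * x =
        (fun i => (Polynomial.C a * X ^ k).eval (d i)) * (d * x) := by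
      funext i
      simp only [Pi.mul_apply, eval_mul, eval_C, eval_pow, eval_X, pow_succ]
      ring
    rw [hshift]
    exact ih _ (hd x hx)

theorem Lagrange.eval_basis_image {ι F : Type*} [Fintype ι] [Field F] [DecidableEq F]
    (d : ι → F) (b : F) (i : ι) :
    (Lagrange.basis (univ.image d) id b).eval (d i) = if d i = b then 1 else 0 := by
  have hdi : d i ∈ univ.image d := mem_image_of_mem d (mem_univ i)
  split_ifs with h
  · subst h
    exact eval_basis_self (v := id) (Set.injOn_id _) hdi
  · exact eval_basis_of_ne (v := id) (Ne.symm h) hdi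

theorem Submodule.indicator_mem_of_mul_mem {ι F : Type*} [Fintype ι] [Field F]
    {C : Submodule F (ι → F)} {d : ι → F} (hd : ∀ x ∈ C, d * x ∈ C) (b : F) :
    ∀ x ∈ C, {i | d i = b}.indicator x ∈ C := by
  classical
  intro x hx
  convert C.eval_mul_mem_of_mul_mem hd (Lagrange.basis (univ.image d) id b) x hx using 1
  funext i
  simp only [Set.indicator_apply, Set.mem_ofPred_eq, Pi.mul_apply, Lagrange.eval_basis_image]
  split_ifs <;> simp

theorem eq_sup_inf_supportedOn_of_indicator_mem {F : Type*} [Field F] {n : ℕ}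
    {C : Submodule F (Fin n → F)} {S : Set (Fin n)} (hS : ∀ x ∈ C, S.indicator x ∈ C) :
    C = (C ⊓ supportedOn S) ⊔ (C ⊓ supportedOn Sᶜ) := by
  refine le_antisymm (fun x hx => ?_) (sup_le inf_le_left inf_le_left)
  have hcompl : Sᶜ.indicator x = x - S.indicator x := by
    rw [eq_sub_iff_add_eq', Set.indicator_self_add_compl]
  have hS_mem : S.indicator x ∈ C ⊓ supportedOn S :=
    ⟨hS x hx, fun i hi => Set.indicator_of_notMem hi x⟩
  have hSc_mem : Sᶜ.indicator x ∈ C ⊓ supportedOn Sᶜ :=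
    ⟨hcompl ▸ C.sub_mem hx (hS x hx), fun i hi => Set.indicator_of_notMem hi x⟩
  rw [← Set.indicator_self_add_compl S x]
  exact Submodule.add_mem_sup hS_mem hSc_mem

theorem eq_of_mul_mem_of_not_isOrthogonalDirectSum {F : Type*} [Field F] {n : ℕ}
    {C : Submodule F (Fin n → F)} (hC : ¬ IsOrthogonalDirectSum C) {d : Fin n → F}
    (hd : ∀ x ∈ C, d * x ∈ C) (i j : Fin n) : d i = d j := by
  by_contra hij
  refine hC ⟨{k | d k = d i}, ⟨i, rfl⟩, fun huniv => hij ?_, ?_⟩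
  · exact (Set.eq_univ_iff_forall.mp huniv j).symm
  · exact eq_sup_inf_supportedOn_of_indicator_mem (C.indicator_mem_of_mul_mem hd (d i))

theorem kernel_of_permutational_part_is_scalars_general
    {F : Type*} [Field F] {n : ℕ}
    (C : Submodule F (Fin n → F)) (hC : ¬ IsOrthogonalDirectSum C) :
    (∀ (σ : (Fin n → F) ≃ₗ[F] (Fin n → F)) (α : Fin n → Fˣ),
      (∀ x i, σ x i = (α i : F) * x i) →
      C.map (σ : (Fin n → F) →ₗ[F] (Fin n → F)) = C →
      ∃ β : Fˣ, ∀ i, α i = β) ∧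
    (∀ β : Fˣ, ∃ σ : (Fin n → F) ≃ₗ[F] (Fin n → F),
      (∀ x i, σ x i = (β : F) * x i) ∧
      C.map (σ : (Fin n → F) →ₗ[F] (Fin n → F)) = C) := by
  refine ⟨fun σ α hσ hmap => ?_, fun β => ⟨LinearEquiv.smulOfUnit β, fun _ _ => rfl, ?_⟩⟩
  · have hα : ∀ x ∈ C, (fun i => (α i : F)) * x ∈ C := fun x hx =>
      hmap ▸ ⟨x, hx, funext (hσ x)⟩
    rcases isEmpty_or_nonempty (Fin n) with _ | ⟨⟨i₀⟩⟩
    · exact ⟨1, isEmptyElim⟩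
    · exact ⟨α i₀, fun i => Units.ext (eq_of_mul_mem_of_not_isOrthogonalDirectSum hC hα i i₀)⟩
  · have hscalar : (LinearEquiv.smulOfUnit (M := Fin n → F) β).toLinearMap =
        (β : F) • LinearMap.id := LinearMap.ext fun _ => rfl
    rw [hscalar, Submodule.map_smul _ _ _ β.ne_zero, Submodule.map_id]

/-- If a linear code `C ⊆ F^n` is not an orthogonal direct sum, then the kernel
of the permutational-part homomorphism restricted to `Mon(C)` consists exactly of
the scalar transformations: every monomial transformation preserving `C` whose
permutational part is trivial (i.e. every diagonal transformation preserving `C`)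
is a scalar, and conversely every scalar transformation preserves `C`.
Hence this kernel is isomorphic to `F^*`. -/
theorem kernel_of_permutational_part_is_scalars
    {F : Type*} [Field F] [Fintype F] {n : ℕ}
    (C : Submodule F (Fin n → F)) (hC : ¬ IsOrthogonalDirectSum C) :
    (∀ (σ : (Fin n → F) ≃ₗ[F] (Fin n → F)) (α : Fin n → Fˣ),
      (∀ x i, σ x i = (α i : F) * x i) →
      C.map (σ : (Fin n → F) →ₗ[F] (Fin n → F)) = C →
      ∃ β : Fˣ, ∀ i, α i = β) ∧
    (∀ β : Fˣ, ∃ σ : (Fin n → F) ≃ₗ[F] (Fin n → F),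
      (∀ x i, σ x i = (β : F) * x i) ∧
      C.map (σ : (Fin n → F) →ₗ[F] (Fin n → F)) = C) :=
  kernel_of_permutational_part_is_scalars_general C hC
end

section
/- Let F be a finite field and let σ ∈ Mon_n(F) have prime order p, where p does not divide |F^*| = |F| − 1. Then there exists τ ∈ Mon_n(F) such that τστ^{-1} has trivial monomial part, i.e., τστ^{-1} is a permutation of the coordinates. -/
/-!
Write `σ x i = α i * x (π⁻¹ i)` and `g = π⁻¹`. Conjugating `σ` by the diagonal matrix `β` replaces
`α i` by `β i * α i * β (g i)⁻¹`, so it suffices to solve `β (g i) = α i * β i` in `Fˣ`. Evaluating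
`σ ^ p = 1` on basis vectors shows that `α` has trivial norm along `g`:
`∏ j < p, α (g^[j] i) = 1`. For such cocycles the partial products `c k i = ∏ j < k, α (g^[j] i)`
satisfy `c (k + 1) i = c k (g i) * α i`, so `γ i = ∏ k < p, c k i` solves the equation for `α ^ p`
instead of `α`; since `p` is prime to `|Fˣ|`, taking `p`-th roots finishes the proof.
-/

open Finset

/-- A monomial transformation of `F^n`: `(σ x) i = α i * x (π⁻¹ i)` with `α i ∈ Fˣ`
and `π` a permutation of the coordinates. -/
def IsMonomial {F : Type*} [Field F] {n : ℕ}
    (σ : (Fin n → F) ≃ₗ[F] (Fin n → F)) : Prop :=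
  ∃ (α : Fin n → Fˣ) (π : Equiv.Perm (Fin n)), ∀ x i, σ x i = (α i : F) * x (π⁻¹ i)

section Cocycle

variable {ι G : Type*} (g : ι → ι)

theorem exists_eq_mul_pow_of_prod_iterate_eq_one [CommMonoid G] {p : ℕ} (α : ι → G)
    (hα : ∀ i, ∏ j ∈ range p, α (g^[j] i) = 1) :
    ∃ γ : ι → G, ∀ i, γ i = γ (g i) * α i ^ p := by
  set c : ℕ → ι → G := fun k i => ∏ j ∈ range k, α (g^[j] i)
  have hc : ∀ k i, c (k + 1) i = c k (g i) * α i := fun k i => prod_range_succ' _ k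
  refine ⟨fun i => ∏ k ∈ range p, c k i, fun i => ?_⟩
  have hcp : c p i = 1 := hα i
  have hc0 : c 0 i = 1 := prod_range_zero _
  calc ∏ k ∈ range p, c k i
      = ∏ k ∈ range (p + 1), c k i := by rw [prod_range_succ, hcp, mul_one]
    _ = ∏ k ∈ range p, c (k + 1) i := by rw [prod_range_succ', hc0, mul_one]
    _ = (∏ k ∈ range p, c k (g i)) * α i ^ p := by
        simp only [hc, prod_mul_distrib, prod_const, card_range]

theorem exists_eq_mul_of_prod_iterate_eq_one [CommGroup G] {p : ℕ}
    (hp : (Nat.card G).Coprime p) (α : ι → G) (hα : ∀ i, ∏ j ∈ range p, α (g^[j] i) = 1) :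
    ∃ β : ι → G, ∀ i, β (g i) = α i * β i := by
  let e : G ≃* G := MulEquiv.ofBijective (powMonoidHom p) hp.pow_left_bijective
  obtain ⟨γ, hγ⟩ := exists_eq_mul_pow_of_prod_iterate_eq_one g α⁻¹ (by simpa [prod_inv_distrib])
  refine ⟨fun i => e.symm (γ i), fun i => ?_⟩
  have hroot : e.symm ((α i)⁻¹ ^ p) = (α i)⁻¹ := e.symm_apply_apply _
  change e.symm (γ (g i)) = α i * e.symm (γ i)
  rw [hγ i, map_mul, Pi.inv_apply, hroot, mul_left_comm, mul_inv_cancel, mul_one]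

end Cocycle

section Monomial

variable {ι R : Type*} [CommSemiring R] {σ : (ι → R) ≃ₗ[R] (ι → R)} {α : ι → R}
  {π : Equiv.Perm ι}

theorem iterate_apply_of_forall_apply_eq (hσ : ∀ x i, σ x i = α i * x (π⁻¹ i)) (k : ℕ)
    (x : ι → R) (i : ι) :
    σ^[k] x i = (∏ j ∈ range k, α ((⇑π⁻¹)^[j] i)) * x ((⇑π⁻¹)^[k] i) := by
  induction k generalizing x with
  | zero => simp
  | succ k ih =>
    rw [Function.iterate_succ_apply, ih, hσ, prod_range_succ, Function.iterate_succ_apply',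
      mul_assoc]

theorem prod_iterate_eq_one_of_pow_eq_one [Nontrivial R]
    (hσ : ∀ x i, σ x i = α i * x (π⁻¹ i)) {k : ℕ} (hk : σ ^ k = 1) (i : ι) :
    ∏ j ∈ range k, α ((⇑π⁻¹)^[j] i) = 1 := by
  classical
  have h := iterate_apply_of_forall_apply_eq hσ k (Pi.single i 1) i
  rw [← LinearEquiv.coe_pow, hk, LinearEquiv.coe_one, id, Pi.single_eq_same] at h
  by_cases hfix : (⇑π⁻¹)^[k] i = i
  · rw [hfix, Pi.single_eq_same, mul_one] at h
    exact h.symm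
  · rw [Pi.single_eq_of_ne hfix, mul_zero] at h
    exact absurd h one_ne_zero

end Monomial

section Diagonal

variable {ι F : Type*} [Field F]

def unitsDiagonal (β : ι → Fˣ) : (ι → F) ≃ₗ[F] (ι → F) :=
  LinearEquiv.piCongrRight fun i => LinearEquiv.smulOfUnit (β i)

theorem unitsDiagonal_conj_apply {σ : (ι → F) ≃ₗ[F] (ι → F)} {α β : ι → Fˣ} {π : Equiv.Perm ι}
    (hσ : ∀ x i, σ x i = α i * x (π⁻¹ i)) (hβ : ∀ i, β (π⁻¹ i) = α i * β i) (x : ι → F)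
    (i : ι) : (unitsDiagonal β * σ * (unitsDiagonal β)⁻¹) x i = x (π⁻¹ i) := by
  change (β i : F) • σ (fun j => ((β j)⁻¹ : Fˣ) • x j) i = x (π⁻¹ i)
  rw [hσ, hβ]
  simp only [mul_inv_rev, Units.smul_def, Units.val_mul, Units.val_inv_eq_inv_val, smul_eq_mul]
  field_simp

end Diagonal

/-- Let `F` be a finite field and let `σ ∈ Mon_n(F)` have prime order `p`, where
`p` does not divide `|F^*| = |F| - 1`.  Then there exists `τ ∈ Mon_n(F)` such
that `τ σ τ⁻¹` has trivial monomial part, i.e. it is a pure coordinate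
permutation. -/
theorem monomial_of_prime_order_conjugate_to_permutation
    {F : Type*} [Field F] [Fintype F] {n : ℕ}
    (σ : (Fin n → F) ≃ₗ[F] (Fin n → F)) (hσ : IsMonomial σ)
    (p : ℕ) (hp : p.Prime) (hord : orderOf σ = p)
    (hdvd : ¬ p ∣ Fintype.card F - 1) :
    ∃ τ : (Fin n → F) ≃ₗ[F] (Fin n → F), IsMonomial τ ∧
      ∃ ρ : Equiv.Perm (Fin n), ∀ x i, (τ * σ * τ⁻¹) x i = x (ρ⁻¹ i) := by
  obtain ⟨α, π, hσα⟩ := hσ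
  have hσp : σ ^ p = 1 := hord ▸ pow_orderOf_eq_one σ
  have hnorm (i : Fin n) : ∏ j ∈ range p, α ((⇑π⁻¹)^[j] i) = 1 :=
    Units.ext <| by push_cast; exact prod_iterate_eq_one_of_pow_eq_one hσα hσp i
  have hcop : (Nat.card Fˣ).Coprime p := by
    rw [Nat.card_units, Nat.card_eq_fintype_card]
    exact (hp.coprime_iff_not_dvd.2 hdvd).symm
  obtain ⟨β, hβ⟩ := exists_eq_mul_of_prod_iterate_eq_one _ hcop α hnorm
  exact ⟨unitsDiagonal β, ⟨β, 1, fun x i => rfl⟩, π, unitsDiagonal_conj_apply hσα hβ⟩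
end

section
/- Let F be a finite field, p a prime different from char(F), and C ⊆ F^n a linear code invariant under the coordinate permutation σ = (1,…,p)(p+1,…,2p)⋯((t−1)p+1,…,tp), which fixes the last f = n − tp coordinates. Let C(σ) = {c ∈ C : c is constant on each of the t cycles} be the fixed code, and let E = {c ∈ C : the sum of the coordinates of c over each cycle is 0 and c vanishes on all fixed coordinates}. Then C = C(σ) ⊕ E, and E is the unique σ-invariant complement of C(σ) in C. -/
open Finset

/-- The linear action of a coordinate permutation on `F^n`: `(π x) i = x (π⁻¹ i)`. -/
def permLinear {F : Type*} [Field F] {n : ℕ} (π : Equiv.Perm (Fin n)) :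
    (Fin n → F) →ₗ[F] (Fin n → F) where
  toFun x := fun i => x (π⁻¹ i)
  map_add' _ _ := rfl
  map_smul' _ _ := rfl

/-- Vectors that are constant on every cycle of `π`. -/
def constantOnCycles {F : Type*} [Field F] {n : ℕ} (π : Equiv.Perm (Fin n)) :
    Submodule F (Fin n → F) where
  carrier := {x | ∀ i, x (π i) = x i}
  add_mem' := by intro a b ha hb i; simp [ha i, hb i]
  zero_mem' := fun _ => rfl
  smul_mem' := by intro c x hx i; simp [hx i]

/-- Vectors vanishing on all fixed points of `π` whose coordinate sum over each
cycle (of length `p`) is zero. -/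
def cycleSumZero {F : Type*} [Field F] {n : ℕ} (π : Equiv.Perm (Fin n)) (p : ℕ) :
    Submodule F (Fin n → F) where
  carrier := {x | (∀ i, π i = i → x i = 0) ∧
    ∀ i, ∑ k ∈ Finset.range p, x ((π ^ k) i) = 0}
  add_mem' := by
    rintro a b ⟨ha1, ha2⟩ ⟨hb1, hb2⟩
    refine ⟨fun i hi => by simp [ha1 i hi, hb1 i hi], fun i => ?_⟩
    simp only [Pi.add_apply, Finset.sum_add_distrib, ha2 i, hb2 i, add_zero]
  zero_mem' := ⟨fun _ _ => rfl, fun i => by simp⟩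
  smul_mem' := by
    rintro c x ⟨h1, h2⟩
    refine ⟨fun i hi => by simp [h1 i hi], fun i => ?_⟩
    simp only [Pi.smul_apply, smul_eq_mul, ← Finset.mul_sum, h2 i, mul_zero]

/-!
Since `σ ^ p = 1` and `p` is invertible in `F`, averaging over the powers of `σ`,
`Q x = p⁻¹ • ∑_{k < p} x ∘ σ ^ k`, is an idempotent endomorphism of `F^n` whose range is
the space of vectors constant on the cycles of `σ` and whose kernel is `cycleSumZero σ p`.
Every `σ`-invariant subspace is `Q`-invariant, and a `Q`-invariant subspace `C` splits as
`(C ⊓ range Q) ⊕ (C ⊓ ker Q)`. A `Q`-invariant complement `E'` of `C ⊓ range Q` in `C`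
lies in `ker Q`, because `Q` maps it into `E' ⊓ range Q = 0`; hence it equals `C ⊓ ker Q`.
-/

lemma Nat.Prime.cast_ne_zero_of_ne_ringChar {R : Type*} [NonAssocSemiring R] [Nontrivial R]
    {p : ℕ} (hp : p.Prime) (hchar : p ≠ ringChar R) : (p : R) ≠ 0 := by
  intro h
  rcases (Nat.dvd_prime hp).1 (ringChar.dvd h) with h1 | h1
  · exact not_subsingleton R (ringChar.ringChar_eq_one.1 h1)
  · exact hchar h1.symm

section Idempotent

variable {R M : Type*} [Ring R] [AddCommGroup M] [Module R M] {f : Module.End R M}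
  {C E : Submodule R M}

open LinearMap

lemma IsIdempotentElem.inf_range_sup_inf_ker (hf : IsIdempotentElem f)
    (hC : C ∈ f.invtSubmodule) : (C ⊓ range f) ⊔ (C ⊓ ker f) = C := by
  refine le_antisymm (sup_le inf_le_left inf_le_left) fun x hx => ?_
  have hfx : f x ∈ C ⊓ range f := ⟨hC hx, mem_range_self f x⟩
  have hsub : x - f x ∈ C ⊓ ker f :=
    ⟨C.sub_mem hx (hC hx), by simp [mem_ker, ← Module.End.mul_apply, hf.eq]⟩
  simpa using Submodule.add_mem_sup hfx hsub

lemma IsIdempotentElem.eq_inf_ker_of_sup_eq_of_inf_eq_bot (hf : IsIdempotentElem f)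
    (hE : E ∈ f.invtSubmodule) (hsup : (C ⊓ range f) ⊔ E = C)
    (hinf : (C ⊓ range f) ⊓ E = ⊥) : E = C ⊓ ker f := by
  have hEC : E ≤ C := hsup ▸ le_sup_right
  have hEker : E ≤ ker f := fun x hx => by
    have : f x ∈ (C ⊓ range f) ⊓ E := ⟨⟨hEC (hE hx), mem_range_self f x⟩, hE hx⟩
    simpa [hinf] using this
  refine le_antisymm (le_inf hEC hEker) fun x ⟨hxC, hxker⟩ => ?_
  obtain ⟨y, ⟨-, z, rfl⟩, e, he, rfl⟩ := Submodule.mem_sup.1 (hsup.symm ▸ hxC : x ∈ _)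
  have hfz : f z = 0 := by
    have h := mem_ker.1 hxker
    rwa [map_add, ← Module.End.mul_apply, hf.eq, mem_ker.1 (hEker he), add_zero] at h
  simpa [hfz] using he

end Idempotent

lemma Equiv.Perm.sum_range_pow_apply_apply_of_pow_eq_one {α M : Type*} [AddCancelCommMonoid M]
    {π : Equiv.Perm α} {p : ℕ} (hπ : π ^ p = 1) (x : α → M) (i : α) :
    ∑ k ∈ range p, x ((π ^ k) (π i)) = ∑ k ∈ range p, x ((π ^ k) i) := by
  have h := (sum_range_succ' (fun k => x ((π ^ k) i)) p).symm.trans (sum_range_succ _ p)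
  simp only [hπ, pow_zero, pow_succ, Equiv.Perm.mul_apply, Equiv.Perm.one_apply] at h
  exact add_right_cancel h

section CycleAverage

variable {F : Type*} [Field F] {n : ℕ} (π : Equiv.Perm (Fin n)) (p : ℕ)

lemma comp_mem_of_map_permLinear_eq {C : Submodule F (Fin n → F)}
    (hC : C.map (permLinear π) = C) {x : Fin n → F} (hx : x ∈ C) : x ∘ π ∈ C := by
  rw [← hC] at hx
  obtain ⟨y, hy, rfl⟩ := hx
  have hy' : permLinear π y ∘ π = y := funext fun i => by simp [permLinear]
  exact hy'.symm ▸ hy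

lemma comp_pow_mem_of_map_permLinear_eq {C : Submodule F (Fin n → F)}
    (hC : C.map (permLinear π) = C) {x : Fin n → F} (hx : x ∈ C) (k : ℕ) :
    x ∘ ⇑(π ^ k) ∈ C := by
  induction k with
  | zero => simpa using hx
  | succ k ih =>
    rw [pow_succ, Equiv.Perm.coe_mul, ← Function.comp_assoc]
    exact comp_mem_of_map_permLinear_eq π hC ih

lemma apply_pow_apply_of_mem_constantOnCycles {x : Fin n → F} (hx : x ∈ constantOnCycles π)
    (k : ℕ) (i : Fin n) : x ((π ^ k) i) = x i := by
  induction k with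
  | zero => rfl
  | succ k ih => rw [pow_succ', Equiv.Perm.mul_apply, hx, ih]

variable (F) in
def cycleAverage : Module.End F (Fin n → F) :=
  (p : F)⁻¹ • ∑ k ∈ range p, LinearMap.funLeft F F ⇑(π ^ k)

lemma cycleAverage_apply (x : Fin n → F) (i : Fin n) :
    cycleAverage F π p x i = (p : F)⁻¹ * ∑ k ∈ range p, x ((π ^ k) i) := by
  simp [cycleAverage, LinearMap.funLeft_apply]

lemma cycleAverage_mem_constantOnCycles (hπ : π ^ p = 1) (x : Fin n → F) :
    cycleAverage F π p x ∈ constantOnCycles π := fun i => by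
  rw [cycleAverage_apply, cycleAverage_apply,
    Equiv.Perm.sum_range_pow_apply_apply_of_pow_eq_one hπ]

lemma cycleAverage_eq_self {p : ℕ} (hp : (p : F) ≠ 0) {x : Fin n → F}
    (hx : x ∈ constantOnCycles π) : cycleAverage F π p x = x := funext fun i => by
  simp [cycleAverage_apply, apply_pow_apply_of_mem_constantOnCycles π hx, hp]

lemma range_cycleAverage (hπ : π ^ p = 1) (hp : (p : F) ≠ 0) :
    LinearMap.range (cycleAverage F π p) = constantOnCycles π := by
  refine le_antisymm ?_ fun x hx => ⟨x, cycleAverage_eq_self π hp hx⟩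
  rintro _ ⟨x, rfl⟩
  exact cycleAverage_mem_constantOnCycles π p hπ x

lemma isIdempotentElem_cycleAverage (hπ : π ^ p = 1) (hp : (p : F) ≠ 0) :
    IsIdempotentElem (cycleAverage F π p) :=
  LinearMap.ext fun x => cycleAverage_eq_self π hp (cycleAverage_mem_constantOnCycles π p hπ x)

lemma ker_cycleAverage {p : ℕ} (hp : (p : F) ≠ 0) :
    LinearMap.ker (cycleAverage F π p) = cycleSumZero π p := by
  ext x
  rw [LinearMap.mem_ker]
  constructor
  · intro h
    have hsum : ∀ i, ∑ k ∈ range p, x ((π ^ k) i) = 0 := fun i => by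
      simpa [cycleAverage_apply, hp] using congrFun h i
    refine ⟨fun i hi => ?_, hsum⟩
    simpa [Equiv.Perm.pow_apply_eq_self_of_apply_eq_self hi, hp] using hsum i
  · rintro ⟨-, hsum⟩
    funext i
    simp [cycleAverage_apply, hsum i]

lemma cycleAverage_mem_invtSubmodule {C : Submodule F (Fin n → F)}
    (hC : C.map (permLinear π) = C) : C ∈ (cycleAverage F π p).invtSubmodule := fun x hx => by
  simp only [Submodule.mem_comap, cycleAverage, LinearMap.smul_apply, LinearMap.sum_apply]
  exact C.smul_mem _ (C.sum_mem fun k _ => comp_pow_mem_of_map_permLinear_eq π hC hx k)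

end CycleAverage

def cycleShift (p t i : ℕ) : ℕ :=
  if i < p * t then p * (i / p) + (i % p + 1) % p else i

lemma cycleShift_mul_add {p t q r : ℕ} (hr : r < p) (hq : q < t) :
    cycleShift p t (p * q + r) = p * q + (r + 1) % p := by
  have hlt : p * q + r < p * t := by nlinarith
  rw [cycleShift, if_pos hlt, Nat.mul_add_div (by omega), Nat.div_eq_of_lt hr, add_zero,
    Nat.mul_add_mod, Nat.mod_eq_of_lt hr]

lemma cycleShift_iterate_mul_add {p t q r : ℕ} (hr : r < p) (hq : q < t) (k : ℕ) :
    (cycleShift p t)^[k] (p * q + r) = p * q + (r + k) % p := by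
  induction k with
  | zero => simp [Nat.mod_eq_of_lt hr]
  | succ k ih =>
    rw [Function.iterate_succ_apply', ih, cycleShift_mul_add (Nat.mod_lt _ (by omega)) hq,
      Nat.mod_add_mod, add_assoc]

lemma cycleShift_iterate_self {p t : ℕ} (hp : 0 < p) (i : ℕ) : (cycleShift p t)^[p] i = i := by
  by_cases hi : i < p * t
  · have h := cycleShift_iterate_mul_add (t := t) (Nat.mod_lt i hp) (Nat.div_lt_of_lt_mul hi) p
    rwa [Nat.add_mod_right, Nat.mod_mod, Nat.div_add_mod] at h
  · exact Function.iterate_fixed (by simp [cycleShift, hi]) p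

lemma Equiv.Perm.pow_eq_one_of_val_apply_eq {n p : ℕ} {σ : Equiv.Perm (Fin n)} {g : ℕ → ℕ}
    (hσ : ∀ i, (σ i : ℕ) = g i) (hg : ∀ i, g^[p] i = i) : σ ^ p = 1 := by
  refine Equiv.Perm.ext fun i => Fin.ext ?_
  have hsemiconj : Function.Semiconj Fin.val σ g := hσ
  rw [Equiv.Perm.coe_pow, hsemiconj.iterate_right p i, hg, Equiv.Perm.one_apply]

theorem fixed_code_decomposition_general
    {F : Type*} [Field F] {p t f : ℕ}
    (hp : p.Prime) (hchar : p ≠ ringChar F)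
    (σ : Equiv.Perm (Fin (p * t + f)))
    (hσ : ∀ i : Fin (p * t + f), (σ i : ℕ) =
      if (i : ℕ) < p * t then p * ((i : ℕ) / p) + (((i : ℕ) % p + 1) % p)
      else (i : ℕ))
    (C : Submodule F (Fin (p * t + f) → F))
    (hinv : C.map (permLinear σ) = C) :
    ((C ⊓ constantOnCycles σ) ⊔ (C ⊓ cycleSumZero σ p) = C ∧
      (C ⊓ constantOnCycles σ) ⊓ (C ⊓ cycleSumZero σ p) = ⊥) ∧
    ∀ E' : Submodule F (Fin (p * t + f) → F), E' ≤ C →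
      E'.map (permLinear σ) = E' →
      (C ⊓ constantOnCycles σ) ⊔ E' = C →
      (C ⊓ constantOnCycles σ) ⊓ E' = ⊥ →
      E' = C ⊓ cycleSumZero σ p := by
  have hp0 : (p : F) ≠ 0 := hp.cast_ne_zero_of_ne_ringChar hchar
  have hσp : σ ^ p = 1 :=
    Equiv.Perm.pow_eq_one_of_val_apply_eq (g := cycleShift p t) hσ (cycleShift_iterate_self hp.pos)
  have hQ := isIdempotentElem_cycleAverage σ p hσp hp0
  rw [← range_cycleAverage σ p hσp hp0, ← ker_cycleAverage σ hp0]
  refine ⟨⟨hQ.inf_range_sup_inf_ker (cycleAverage_mem_invtSubmodule σ p hinv), ?_⟩,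
    fun E' _ hE' hsup hinf =>
      hQ.eq_inf_ker_of_sup_eq_of_inf_eq_bot (cycleAverage_mem_invtSubmodule σ p hE') hsup hinf⟩
  exact ((LinearMap.IsIdempotentElem.isCompl hQ).disjoint.mono inf_le_right inf_le_right).eq_bot

/-- Let `p` be a prime different from `char F` and let `C ⊆ F^n`, `n = pt + f`,
be a linear code invariant under the coordinate permutation `σ` consisting of
the `t` `p`-cycles `(1,…,p)⋯((t-1)p+1,…,tp)`, fixing the last `f` coordinates.
Let `C(σ) = C ⊓ constantOnCycles σ` be the fixed code and
`E = C ⊓ cycleSumZero σ p` the subcode of words vanishing at fixed points whose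
cycle sums are zero.  Then `C = C(σ) ⊕ E`, and `E` is the unique `σ`-invariant
complement of `C(σ)` in `C`. -/
theorem fixed_code_decomposition
    {F : Type*} [Field F] [Fintype F] {p t f : ℕ}
    (hp : p.Prime) (hchar : p ≠ ringChar F)
    (σ : Equiv.Perm (Fin (p * t + f)))
    (hσ : ∀ i : Fin (p * t + f), (σ i : ℕ) =
      if (i : ℕ) < p * t then p * ((i : ℕ) / p) + (((i : ℕ) % p + 1) % p)
      else (i : ℕ))
    (C : Submodule F (Fin (p * t + f) → F))
    (hinv : C.map (permLinear σ) = C) :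
    ((C ⊓ constantOnCycles σ) ⊔ (C ⊓ cycleSumZero σ p) = C ∧
      (C ⊓ constantOnCycles σ) ⊓ (C ⊓ cycleSumZero σ p) = ⊥) ∧
    ∀ E' : Submodule F (Fin (p * t + f) → F), E' ≤ C →
      E'.map (permLinear σ) = E' →
      (C ⊓ constantOnCycles σ) ⊔ E' = C →
      (C ⊓ constantOnCycles σ) ⊓ E' = ⊥ →
      E' = C ⊓ cycleSumZero σ p :=
  fixed_code_decomposition_general hp hchar σ hσ C hinv
end

section
/- Let F be a finite field, p a prime different from char(F), and C = C^⊥ ⊆ F^n a self-dual code (with respect to the standard bilinear form ∑_{i=1}^n x_i y_i) invariant under the coordinate permutation σ = (1,…,p)(p+1,…,2p)⋯((t−1)p+1,…,tp) fixing the last f = n − tp coordinates. Let C(σ) be the fixed code of σ and define π_t : C(σ) → F^t by π_t(c) = (c_p, c_{2p}, …, c_{tp}) and π_f : C(σ) → F^f by π_f(c) = (c_{tp+1}, …, c_{tp+f}). Then the code C(σ)* = {(π_t(c), π_f(c)) : c ∈ C(σ)} ⊆ F^{t+f} is self-dual with respect to the nondegenerate symmetric bilinear form b(x,y) = ∑_{i=1}^t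 p·x_i y_i + ∑_{j=t+1}^{t+f} x_j y_j. -/
open Finset

/-- Self-duality with respect to a bilinear form given as a function. -/
def IsSelfDualWith {F : Type*} [Field F] {n : ℕ}
    (B : (Fin n → F) → (Fin n → F) → F) (C : Submodule F (Fin n → F)) : Prop :=
  ∀ x, x ∈ C ↔ ∀ c ∈ C, B x c = 0

/-- The standard bilinear form `∑ i, x i * y i`. -/
def stdB {F : Type*} [Field F] {n : ℕ} (x y : Fin n → F) : F := ∑ i, x i * y i

/-- The projection `c ↦ (π_t(c), π_f(c)) = (c_p, c_{2p}, …, c_{tp}, c_{tp+1}, …, c_{tp+f})`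
(1-based indexing) from `F^(pt+f)` to `F^(t+f)`. -/
def projTF {F : Type*} [Field F] (p t f : ℕ) (hp : 0 < p) :
    (Fin (p * t + f) → F) →ₗ[F] (Fin (t + f) → F) where
  toFun x j :=
    if h : (j : ℕ) < t then
      x ⟨p * (j : ℕ) + (p - 1), by
        have h1 : p * ((j : ℕ) + 1) ≤ p * t := Nat.mul_le_mul_left p h
        have h2 : p * ((j : ℕ) + 1) = p * (j : ℕ) + p := by ring
        omega⟩
    else
      x ⟨p * t + ((j : ℕ) - t), by have := j.isLt; omega⟩
  map_add' x y := by
    funext j; by_cases h : (j : ℕ) < t <;> simp [h]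
  map_smul' c x := by
    funext j; by_cases h : (j : ℕ) < t <;> simp [h]

/-!
A vector constant on the cycles of `σ` is the lift of its image under `projTF`, and for two
such vectors the standard form equals `b` of their images, since each `p`-cycle contributes `p`
equal products. Hence `C(σ)*` is self-orthogonal for `b`. Conversely, let `x` be
`b`-orthogonal to `C(σ)*` and let `v` be its cycle-constant lift. For `c ∈ C` the orbit sum
`∑_{k<p} σ^k c` lies in `C(σ)`, and the `σ`-invariance of `v` gives
`(v, ∑_{k<p} σ^k c) = p (v, c)`. As `p ≠ 0` in `F`, `v ⊥ C`, so `v ∈ C` by self-duality and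
`x = π(v) ∈ C(σ)*`.
-/

theorem natCast_ne_zero_of_ne_ringChar {R : Type*} [NonAssocRing R] [NoZeroDivisors R]
    [Nontrivial R] {p : ℕ} (hp : p.Prime) (hchar : p ≠ ringChar R) : (p : R) ≠ 0 := by
  intro h
  have hdvd : ringChar R ∣ p := ringChar.dvd h
  rcases CharP.char_is_prime_or_zero R (ringChar R) with hq | hq
  · exact hchar ((Nat.prime_dvd_prime_iff_eq hq hp).1 hdvd).symm
  · rw [hq, zero_dvd_iff] at hdvd
    exact hp.ne_zero hdvd

section PermLinear

variable {F : Type*} [Field F] {n : ℕ}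

@[simp]
theorem permLinear_apply (π : Equiv.Perm (Fin n)) (x : Fin n → F) (i : Fin n) :
    permLinear π x i = x (π⁻¹ i) := rfl

theorem stdB_eq_dotProduct (x y : Fin n → F) : stdB x y = x ⬝ᵥ y := rfl

theorem permLinear_mul (π ρ : Equiv.Perm (Fin n)) :
    permLinear (F := F) (π * ρ) = permLinear π ∘ₗ permLinear ρ := rfl

theorem mem_constantOnCycles_iff_permLinear_eq {π : Equiv.Perm (Fin n)} {v : Fin n → F} :
    v ∈ constantOnCycles π ↔ permLinear π v = v := by
  constructor
  · intro hv
    funext i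
    simpa using (hv (π⁻¹ i)).symm
  · intro hv i
    simpa using (congrFun hv (π i)).symm

theorem constantOnCycles_le_pow (π : Equiv.Perm (Fin n)) (k : ℕ) :
    constantOnCycles (F := F) π ≤ constantOnCycles (π ^ k) := by
  intro v hv i
  induction k with
  | zero => rfl
  | succ k ih => rw [pow_succ', Equiv.Perm.mul_apply, hv, ih]

theorem permLinear_pow_mem {π : Equiv.Perm (Fin n)} {C : Submodule F (Fin n → F)}
    (hC : C.map (permLinear π) ≤ C) {c : Fin n → F} (hc : c ∈ C) (k : ℕ) :
    permLinear (π ^ k) c ∈ C := by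
  induction k with
  | zero => exact hc
  | succ k ih =>
    rw [pow_succ', permLinear_mul]
    exact hC (Submodule.mem_map_of_mem ih)

theorem stdB_permLinear (π : Equiv.Perm (Fin n)) (x y : Fin n → F) :
    stdB (permLinear π x) (permLinear π y) = stdB x y :=
  Equiv.sum_comp π⁻¹ fun i => x i * y i

def orbitSum (π : Equiv.Perm (Fin n)) (m : ℕ) (c : Fin n → F) : Fin n → F :=
  ∑ k ∈ range m, permLinear (π ^ k) c

theorem orbitSum_mem {π : Equiv.Perm (Fin n)} {C : Submodule F (Fin n → F)}
    (hC : C.map (permLinear π) ≤ C) (m : ℕ) {c : Fin n → F} (hc : c ∈ C) :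
    orbitSum π m c ∈ C :=
  C.sum_mem fun k _ => permLinear_pow_mem hC hc k

theorem orbitSum_mem_constantOnCycles {π : Equiv.Perm (Fin n)} {m : ℕ} (hπ : π ^ m = 1)
    (c : Fin n → F) : orbitSum π m c ∈ constantOnCycles π := by
  rw [mem_constantOnCycles_iff_permLinear_eq, orbitSum, map_sum]
  have hshift := Finset.sum_range_succ' (fun k => permLinear (F := F) (π ^ k) c) m
  rw [Finset.sum_range_succ, hπ, pow_zero, add_left_inj] at hshift
  simpa only [← LinearMap.comp_apply, ← permLinear_mul, ← pow_succ'] using hshift.symm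

theorem stdB_orbitSum {π : Equiv.Perm (Fin n)} {v : Fin n → F} (hv : v ∈ constantOnCycles π)
    (m : ℕ) (c : Fin n → F) : stdB v (orbitSum π m c) = m * stdB v c := by
  have hterm : ∀ k, stdB v (permLinear (π ^ k) c) = stdB v c := fun k => by
    conv_lhs =>
      rw [← mem_constantOnCycles_iff_permLinear_eq.1 (constantOnCycles_le_pow π k hv)]
    exact stdB_permLinear _ v c
  simp only [orbitSum, stdB_eq_dotProduct, dotProduct_sum] at hterm ⊢
  simp [hterm]

end PermLinear

section BlockRotation

variable {p t f : ℕ}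

open Fin.NatCast

def IsBlockRotation (p t f : ℕ) (σ : Equiv.Perm (Fin (p * t + f))) : Prop :=
  ∀ i : Fin (p * t + f), (σ i : ℕ) =
    if (i : ℕ) < p * t then p * ((i : ℕ) / p) + (((i : ℕ) % p + 1) % p) else (i : ℕ)

def blockEquiv (p t f : ℕ) : Fin t × Fin p ⊕ Fin f ≃ Fin (p * t + f) :=
  (Equiv.sumCongr (finProdFinEquiv.trans (finCongr (mul_comm t p))) (Equiv.refl _)).trans
    finSumFinEquiv

@[simp]
theorem val_blockEquiv_inl (q : Fin t) (r : Fin p) :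
    (blockEquiv p t f (.inl (q, r)) : ℕ) = p * q + r := by
  simp [blockEquiv, add_comm]

@[simp]
theorem val_blockEquiv_inr (j : Fin f) : (blockEquiv p t f (.inr j) : ℕ) = p * t + j := by
  simp [blockEquiv]

section Lift

variable {α : Type*}

def liftTF (p t f : ℕ) (x : Fin (t + f) → α) : Fin (p * t + f) → α :=
  fun i => Sum.elim (fun a => x (Fin.castAdd f a.1)) (fun j => x (Fin.natAdd t j))
    ((blockEquiv p t f).symm i)

@[simp]
theorem liftTF_inl (x : Fin (t + f) → α) (q : Fin t) (r : Fin p) :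
    liftTF p t f x (blockEquiv p t f (.inl (q, r))) = x (Fin.castAdd f q) := by
  simp [liftTF]

@[simp]
theorem liftTF_inr (x : Fin (t + f) → α) (j : Fin f) :
    liftTF p t f x (blockEquiv p t f (.inr j)) = x (Fin.natAdd t j) := by
  simp [liftTF]

end Lift

variable {F : Type*} [Field F]

theorem projTF_castAdd (hp : 0 < p) (v : Fin (p * t + f) → F) (q : Fin t) :
    projTF p t f hp v (Fin.castAdd f q) =
      v (blockEquiv p t f (.inl (q, ⟨p - 1, Nat.sub_lt hp one_pos⟩))) := by
  simp only [projTF, LinearMap.coe_mk, AddHom.coe_mk, Fin.val_castAdd, q.isLt, dif_pos]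
  congr 1
  ext
  simp

theorem projTF_natAdd (hp : 0 < p) (v : Fin (p * t + f) → F) (j : Fin f) :
    projTF p t f hp v (Fin.natAdd t j) = v (blockEquiv p t f (.inr j)) := by
  simp only [projTF, LinearMap.coe_mk, AddHom.coe_mk, Fin.val_natAdd]
  rw [dif_neg (by omega)]
  congr 1
  ext
  simp

theorem projTF_liftTF (hp : 0 < p) (x : Fin (t + f) → F) :
    projTF p t f hp (liftTF p t f x) = x := by
  funext j
  refine Fin.addCases (fun q => ?_) (fun j => ?_) j
  · rw [projTF_castAdd, liftTF_inl]
  · rw [projTF_natAdd, liftTF_inr]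

def weightedStdB (p t f : ℕ) (x y : Fin (t + f) → F) : F :=
  ∑ i : Fin (t + f), (if (i : ℕ) < t then (p : F) else 1) * x i * y i

theorem stdB_liftTF (x y : Fin (t + f) → F) :
    stdB (liftTF p t f x) (liftTF p t f y) = weightedStdB p t f x y := by
  rw [stdB, ← (blockEquiv p t f).sum_comp]
  simp [Fintype.sum_sum_type, Fintype.sum_prod_type, weightedStdB, Fin.sum_univ_add, mul_assoc]

namespace IsBlockRotation

variable {σ : Equiv.Perm (Fin (p * t + f))}

theorem apply_inl [NeZero p] (hσ : IsBlockRotation p t f σ) (q : Fin t) (r : Fin p) :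
    σ (blockEquiv p t f (.inl (q, r))) = blockEquiv p t f (.inl (q, r + 1)) := by
  have hlt : p * q + r < p * t := by nlinarith [q.isLt, r.isLt]
  have hdiv : (p * q + r) / p = q := by
    rw [Nat.mul_add_div (NeZero.pos p), Nat.div_eq_of_lt r.isLt, add_zero]
  have hmod : (p * q + r) % p = r := by rw [Nat.mul_add_mod, Nat.mod_eq_of_lt r.isLt]
  ext
  rw [hσ, val_blockEquiv_inl, if_pos hlt, hdiv, hmod, val_blockEquiv_inl, Fin.val_add,
    Fin.val_one', Nat.add_mod_mod]

theorem apply_inr (hσ : IsBlockRotation p t f σ) (j : Fin f) :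
    σ (blockEquiv p t f (.inr j)) = blockEquiv p t f (.inr j) := by
  ext
  rw [hσ, val_blockEquiv_inr, if_neg (by omega)]

theorem pow_apply_inl [NeZero p] (hσ : IsBlockRotation p t f σ) (k : ℕ) (q : Fin t)
    (r : Fin p) :
    (σ ^ k) (blockEquiv p t f (.inl (q, r))) = blockEquiv p t f (.inl (q, r + (k : Fin p))) := by
  induction k with
  | zero => simp
  | succ k ih => rw [pow_succ', Equiv.Perm.mul_apply, ih, hσ.apply_inl, Nat.cast_succ, add_assoc]

theorem pow_apply_inr (hσ : IsBlockRotation p t f σ) (k : ℕ) (j : Fin f) :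
    (σ ^ k) (blockEquiv p t f (.inr j)) = blockEquiv p t f (.inr j) := by
  induction k with
  | zero => rfl
  | succ k ih => rw [pow_succ', Equiv.Perm.mul_apply, ih, hσ.apply_inr]

theorem pow_eq_one [NeZero p] (hσ : IsBlockRotation p t f σ) : σ ^ p = 1 := by
  ext i
  obtain ⟨⟨q, r⟩ | j, rfl⟩ := (blockEquiv p t f).surjective i
  · rw [hσ.pow_apply_inl, Fin.natCast_self, add_zero, Equiv.Perm.one_apply]
  · rw [hσ.pow_apply_inr, Equiv.Perm.one_apply]

theorem apply_inl_eq_of_mem [NeZero p] (hσ : IsBlockRotation p t f σ) {v : Fin (p * t + f) → F}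
    (hv : v ∈ constantOnCycles σ) (q : Fin t) (r s : Fin p) :
    v (blockEquiv p t f (.inl (q, r))) = v (blockEquiv p t f (.inl (q, s))) := by
  have hrot :=
    constantOnCycles_le_pow σ (s - r : Fin p).val hv (blockEquiv p t f (.inl (q, r)))
  rwa [hσ.pow_apply_inl, Fin.cast_val_eq_self, add_sub_cancel, eq_comm] at hrot

theorem liftTF_mem [NeZero p] (hσ : IsBlockRotation p t f σ) (x : Fin (t + f) → F) :
    liftTF p t f x ∈ constantOnCycles σ := by
  intro i
  obtain ⟨⟨q, r⟩ | j, rfl⟩ := (blockEquiv p t f).surjective i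
  · rw [hσ.apply_inl, liftTF_inl, liftTF_inl]
  · rw [hσ.apply_inr]

theorem liftTF_projTF (hσ : IsBlockRotation p t f σ) (hp : 0 < p) {v : Fin (p * t + f) → F}
    (hv : v ∈ constantOnCycles σ) : liftTF p t f (projTF p t f hp v) = v := by
  have : NeZero p := NeZero.of_pos hp
  funext i
  obtain ⟨⟨q, r⟩ | j, rfl⟩ := (blockEquiv p t f).surjective i
  · rw [liftTF_inl, projTF_castAdd]
    exact hσ.apply_inl_eq_of_mem hv q _ r
  · rw [liftTF_inr, projTF_natAdd]

theorem stdB_eq_weightedStdB (hσ : IsBlockRotation p t f σ) (hp : 0 < p)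
    {v w : Fin (p * t + f) → F} (hv : v ∈ constantOnCycles σ)
    (hw : w ∈ constantOnCycles σ) :
    stdB v w = weightedStdB p t f (projTF p t f hp v) (projTF p t f hp w) := by
  rw [← stdB_liftTF, hσ.liftTF_projTF hp hv, hσ.liftTF_projTF hp hw]

end IsBlockRotation

end BlockRotation

theorem projected_fixed_code_self_dual_general
    {F : Type*} [Field F] {p t f : ℕ}
    (hp : p.Prime) (hchar : p ≠ ringChar F)
    (σ : Equiv.Perm (Fin (p * t + f)))
    (hσ : ∀ i : Fin (p * t + f), (σ i : ℕ) =
      if (i : ℕ) < p * t then p * ((i : ℕ) / p) + (((i : ℕ) % p + 1) % p)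
      else (i : ℕ))
    (C : Submodule F (Fin (p * t + f) → F))
    (hsd : IsSelfDualWith stdB C)
    (hinv : C.map (permLinear σ) = C) :
    IsSelfDualWith
      (fun x y => ∑ i : Fin (t + f),
        (if (i : ℕ) < t then (p : F) else 1) * x i * y i)
      ((C ⊓ constantOnCycles σ).map (projTF p t f hp.pos)) := by
  have : NeZero p := ⟨hp.ne_zero⟩
  replace hσ : IsBlockRotation p t f σ := hσ
  change IsSelfDualWith (weightedStdB p t f) _
  intro x
  constructor
  · rintro ⟨u, ⟨huC, hu⟩, rfl⟩ _ ⟨w, ⟨hwC, hw⟩, rfl⟩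
    rw [← hσ.stdB_eq_weightedStdB hp.pos hu hw]
    exact (hsd u).1 huC w hwC
  · intro hx
    have hlift := hσ.liftTF_mem x
    refine ⟨liftTF p t f x, ⟨(hsd _).2 fun c hc => ?_, hlift⟩, projTF_liftTF hp.pos x⟩
    have hS := orbitSum_mem_constantOnCycles hσ.pow_eq_one c
    have hxS : weightedStdB p t f x (projTF p t f hp.pos (orbitSum σ p c)) = 0 :=
      hx _ ⟨_, ⟨orbitSum_mem hinv.le p hc, hS⟩, rfl⟩
    rw [← projTF_liftTF hp.pos x, ← hσ.stdB_eq_weightedStdB hp.pos hlift hS,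
      stdB_orbitSum hlift] at hxS
    exact (mul_eq_zero.1 hxS).resolve_left (natCast_ne_zero_of_ne_ringChar hp hchar)

/-- Let `p ≠ char F` be prime and `C = C^⊥ ⊆ F^(pt+f)` a self-dual code (standard
bilinear form) invariant under the coordinate permutation `σ` with `t` `p`-cycles
`(1,…,p)⋯((t-1)p+1,…,tp)` and `f` fixed points.  Then the projected fixed code
`C(σ)* = {(π_t c, π_f c) : c ∈ C(σ)} ⊆ F^(t+f)` is self-dual with respect to the
bilinear form `b(x,y) = ∑_{i<t} p·x_i y_i + ∑_{t≤j<t+f} x_j y_j`. -/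
theorem projected_fixed_code_self_dual
    {F : Type*} [Field F] [Fintype F] {p t f : ℕ}
    (hp : p.Prime) (hchar : p ≠ ringChar F)
    (σ : Equiv.Perm (Fin (p * t + f)))
    (hσ : ∀ i : Fin (p * t + f), (σ i : ℕ) =
      if (i : ℕ) < p * t then p * ((i : ℕ) / p) + (((i : ℕ) % p + 1) % p)
      else (i : ℕ))
    (C : Submodule F (Fin (p * t + f) → F))
    (hsd : IsSelfDualWith stdB C)
    (hinv : C.map (permLinear σ) = C) :
    IsSelfDualWith
      (fun x y => ∑ i : Fin (t + f),
        (if (i : ℕ) < t then (p : F) else 1) * x i * y i)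
      ((C ⊓ constantOnCycles σ).map (projTF p t f hp.pos)) :=
  projected_fixed_code_self_dual_general hp hchar σ hσ C hsd hinv
end

section
/- Let t, f be nonnegative integers and suppose there exists a linear code C ⊆ F_3^{t+f} that equals its orthogonal complement with respect to the nondegenerate symmetric bilinear form b(x,y) = −∑_{i=1}^t x_i y_i + ∑_{j=t+1}^{t+f} x_j y_j. Then t ≡ f (mod 4). -/
/-!
For a nontrivial additive character `ψ` of `𝔽₃`, compare two evaluations of the Gauss sum
`S = ∑ₓ ψ (b(x, x))`. Translating `x` by the elements of a self-dual code `C`, on which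
`b(c, c) = 0`, and using orthogonality of characters on `C` gives `|C| S = |C|²`, so `S = |C|`.
Since `b` is diagonal, `S` also factors as `(-g)ᵗ gᶠ` with `g = ∑ₐ ψ (a²)` and `g² = -3`.
Squaring shows that `t + f = 2k` is even, and then `|C| = (-1)^(t + k) 3ᵏ > 0` forces
`t + k` to be even, that is `t ≡ f [MOD 4]`.
-/

open Finset

lemma ZMod.sum_univ_three {M : Type*} [AddCommMonoid M] (h : ZMod 3 → M) :
    ∑ a, h a = h 0 + h 1 + h 2 :=
  Fin.sum_univ_three h

namespace AddChar

lemma map_sum_eq_prod {A M ι : Type*} [AddCommMonoid A] [CommMonoid M] (ψ : AddChar A M)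
    (s : Finset ι) (g : ι → A) : ψ (∑ i ∈ s, g i) = ∏ i ∈ s, ψ (g i) :=
  map_prod ψ.toMonoidHom (fun i => Multiplicative.ofAdd (g i)) s

lemma sum_diagonal_quadratic_eq_prod {ι F R : Type*} [Fintype ι] [DecidableEq ι] [CommRing F]
    [Fintype F] [CommSemiring R] (ψ : AddChar F R) (ε : ι → F) :
    ∑ x : ι → F, ψ (∑ i, ε i * x i * x i) = ∏ i, ∑ a, ψ (ε i * a * a) := by
  rw [prod_univ_sum, Fintype.piFinset_univ]
  exact sum_congr rfl fun x _ => map_sum_eq_prod ψ _ _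

section ZModThree

variable {R : Type*} [CommRing R] [IsDomain R] {ψ : AddChar (ZMod 3) R}

lemma apply_one_sq_add_apply_one_add_one (hψ : ψ ≠ 1) : ψ 1 ^ 2 + ψ 1 + 1 = 0 := by
  have hcube : ψ 1 ^ 3 = 1 := by
    rw [← map_nsmul_eq_pow]
    exact (congrArg ψ (by decide : (3 • 1 : ZMod 3) = 0)).trans (map_zero_eq_one ψ)
  have hne : ψ 1 - 1 ≠ 0 := sub_ne_zero.2 ((zmod_char_ne_one_iff 3 ψ).1 hψ)
  refine (mul_eq_zero.1 ?_).resolve_left hne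
  linear_combination hcube

lemma sq_sum_mul_self_zmod_three (hψ : ψ ≠ 1) : (∑ a, ψ (a * a)) ^ 2 = -3 := by
  rw [ZMod.sum_univ_three]
  simp only [mul_zero, mul_one, (by decide : (2 * 2 : ZMod 3) = 1), map_zero_eq_one]
  linear_combination 4 * apply_one_sq_add_apply_one_add_one hψ

lemma sum_neg_mul_self_zmod_three (hψ : ψ ≠ 1) : ∑ a, ψ (-(a * a)) = -∑ a, ψ (a * a) := by
  have h2 : ψ 2 = ψ 1 ^ 2 := by rw [← map_nsmul_eq_pow]; rfl
  rw [ZMod.sum_univ_three, ZMod.sum_univ_three]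
  simp only [mul_zero, mul_one, neg_zero, (by decide : (2 * 2 : ZMod 3) = 1),
    (by decide : (-1 : ZMod 3) = 2), h2, map_zero_eq_one]
  linear_combination 2 * apply_one_sq_add_apply_one_add_one hψ

end ZModThree

variable {F V R : Type*} [Field F] [AddCommGroup V] [Module F V]
  [CommRing R] [IsDomain R] {ψ : AddChar F R}

lemma sum_apply_linearMap_eq_zero [Fintype V] (hψ : ψ ≠ 1) {L : V →ₗ[F] F} (hL : L ≠ 0) :
    ∑ v, ψ (L v) = 0 := by
  obtain ⟨a, ha⟩ := ne_one_iff.1 hψ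
  obtain ⟨v, hv⟩ : ∃ v, L v ≠ 0 := by simpa [LinearMap.ext_iff] using hL
  refine sum_eq_zero_of_ne_one (ψ := ψ.compAddMonoidHom L.toAddMonoidHom)
    (ne_one_iff.2 ⟨(a / L v) • v, ?_⟩)
  simpa [hv] using ha

open Classical in
lemma sum_mul_apply_eq_ite_mem_orthogonal (hψ : ψ ≠ 1) {a : F} (ha : a ≠ 0)
    (B : LinearMap.BilinForm F V) (C : Submodule F V) [Fintype C] (x : V) :
    ∑ c : C, ψ (a * B c x) = if x ∈ B.orthogonal C then (Nat.card C : R) else 0 := by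
  split_ifs with hx
  · simp [(B.mem_orthogonal_iff).1 hx, Nat.card_eq_fintype_card]
  · have hL : (a • B.flip x).domRestrict C ≠ 0 := fun hL => hx fun c hc => by
      simpa [ha] using LinearMap.congr_fun hL ⟨c, hc⟩
    simpa using sum_apply_linearMap_eq_zero hψ hL

theorem sum_apply_self_eq_card_of_orthogonal_eq [Fintype V] [CharZero R] (hψ : ψ ≠ 1) (h2 : (2 : F) ≠ 0)
    {B : LinearMap.BilinForm F V} (hB : B.IsSymm) {C : Submodule F V}
    (hC : B.orthogonal C = C) :
    ∑ x, ψ (B x x) = Nat.card C := by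
  classical
  have hself : ∀ c ∈ C, B c c = 0 := fun c hc =>
    (SetLike.ext_iff.1 hC c).2 hc c hc
  have hshift : ∀ (x : V) (c : C), ψ (B (x + c) (x + c)) = ψ (B x x) * ψ (2 * B c x) := by
    intro x c
    rw [← map_add_eq_mul]
    simp only [map_add, LinearMap.add_apply, hB.eq x (c : V), hself c c.2]
    ring_nf
  have hcount :
      ∑ x : V, (if x ∈ C then (Nat.card C : R) else 0) = Nat.card C * Nat.card C := by
    simp [Finset.sum_ite, Fintype.card_subtype, Nat.card_eq_fintype_card]
  refine mul_left_cancel₀ (Nat.cast_ne_zero.2 (Nat.card_pos (α := C)).ne') ?_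
  calc (Nat.card C : R) * ∑ x, ψ (B x x)
      = ∑ c : C, ∑ x, ψ (B (x + c) (x + c)) := by
        rw [Nat.card_eq_fintype_card, ← nsmul_eq_mul, ← card_univ, ← sum_const]
        exact sum_congr rfl fun c _ =>
          (Fintype.sum_equiv (Equiv.addRight (c : V)) _ _ fun x => rfl).symm
    _ = ∑ x, ψ (B x x) * ∑ c : C, ψ (2 * B c x) := by
        rw [sum_comm]
        simp only [hshift, mul_sum]
    _ = ∑ x : V, (if x ∈ C then (Nat.card C : R) else 0) := by
        refine sum_congr rfl fun x _ => ?_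
        rw [sum_mul_apply_eq_ite_mem_orthogonal hψ h2, hC]
        split_ifs with hx
        · rw [hself x hx, map_zero_eq_one, one_mul]
        · rw [mul_zero]
    _ = Nat.card C * Nat.card C := hcount

end AddChar

lemma Nat.modEq_four_of_natCast_eq_neg_pow_mul_pow {g : ℂ} (hg : g ^ 2 = -3) {t f N : ℕ}
    (hN : (N : ℂ) = (-g) ^ t * g ^ f) : t ≡ f [MOD 4] := by
  have key : (N : ℂ) = (-1) ^ t * g ^ (t + f) := by rw [hN, neg_pow, pow_add]; ring
  obtain ⟨k, hk | hk⟩ := Nat.even_or_odd' (t + f)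
  · have hNk : (N : ℤ) = (-1) ^ (t + k) * 3 ^ k := by
      have : (N : ℂ) = (-1) ^ (t + k) * 3 ^ k := by
        rw [key, hk, pow_mul, hg, pow_add, neg_pow (3 : ℂ)]; ring
      exact_mod_cast this
    obtain ⟨j, hj⟩ : Even (t + k) := by
      by_contra hodd
      rw [Nat.not_even_iff_odd.1 hodd |>.neg_one_pow] at hNk
      have : (0 : ℤ) < 3 ^ k := by positivity
      omega
    show t % 4 = f % 4
    omega
  · have hNsq : (N : ℤ) ^ 2 = -(3 * 9 ^ k) := by
      have : (N : ℂ) ^ 2 = -(3 * 9 ^ k) := by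
        rw [key, mul_pow, ← pow_mul, ← pow_mul, mul_comm t, mul_comm (t + f), pow_mul, pow_mul, hg,
          hk, pow_succ (-3 : ℂ), pow_mul]
        ring
      exact_mod_cast this
    nlinarith [sq_nonneg (N : ℤ), pow_pos (by norm_num : (0 : ℤ) < 9) k]

/-- If there is a code `C ⊆ F₃^(t+f)` equal to its orthogonal complement with
respect to the bilinear form `b(x,y) = -∑_{i<t} x_i y_i + ∑_{t≤j<t+f} x_j y_j`,
then `t ≡ f (mod 4)`. -/
theorem self_dual_signature_mod_four (t f : ℕ)
    (h : ∃ C : Submodule (ZMod 3) (Fin (t + f) → ZMod 3),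
      IsSelfDualWith
        (fun x y => ∑ i : Fin (t + f),
          (if (i : ℕ) < t then (-1 : ZMod 3) else 1) * x i * y i) C) :
    t ≡ f [MOD 4] := by
  obtain ⟨C, hC⟩ := h
  set ε : Fin (t + f) → ZMod 3 := fun i => if (i : ℕ) < t then -1 else 1
  set B := Matrix.toBilin' (Matrix.diagonal ε)
  have hB : ∀ x y, B x y = ∑ i, ε i * x i * y i := fun x y => by
    simp only [B, Matrix.toBilin'_apply', dotProduct, Matrix.mulVec_diagonal]
    exact sum_congr rfl fun i _ => by ring
  have hsymm : B.IsSymm := Matrix.isSymm_toBilin'_iff_isSymm.2 (Matrix.isSymm_diagonal ε)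
  have hCorth : B.orthogonal C = C := by
    ext x
    rw [LinearMap.BilinForm.mem_orthogonal_iff, hC x]
    simp only [hsymm.eq _ x, hB]
    rfl
  have hψ : (ZMod.stdAddChar : AddChar (ZMod 3) ℂ) ≠ 1 := by
    simpa using ZMod.isPrimitive_stdAddChar 3 one_ne_zero
  have hN := AddChar.sum_apply_self_eq_card_of_orthogonal_eq hψ (by decide) hsymm hCorth
  simp only [hB, AddChar.sum_diagonal_quadratic_eq_prod, Fin.prod_univ_add] at hN
  refine Nat.modEq_four_of_natCast_eq_neg_pow_mul_pow (N := Nat.card C)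
    (AddChar.sq_sum_mul_self_zmod_three hψ) ?_
  rw [← hN]
  simp [ε, AddChar.sum_neg_mul_self_zmod_three hψ]
end

section
/- Let g ∈ F_3[x] be an irreducible factor of degree 5 of x^{11} − 1, and let Z ⊆ F_3^{11} be the cyclic code of length 11 with generator polynomial (x−1)g. Then Z has dimension 5, exactly 132 codewords of Hamming weight 6, exactly 110 codewords of Hamming weight 9, and no other nonzero codewords; i.e., its weight enumerator is x^{11} + 132 x^5 y^6 + 110 x^2 y^9. -/
open Finset Polynomial

/-- The cyclic code of length `m` over `F₃` with generator polynomial `q`: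
the ideal generated by `q` in `F₃[x]/(x^m - 1)`, identified with a subspace of
`F₃^m` via the coefficient basis. -/
def cyclicCode (m : ℕ) (q : Polynomial (ZMod 3)) :
    Submodule (ZMod 3) (Fin m → ZMod 3) :=
  Submodule.span (ZMod 3)
    {v : Fin m → ZMod 3 | ∃ r : Polynomial (ZMod 3),
      ∀ i : Fin m, v i = ((q * r) %ₘ (X ^ m - 1)).coeff i}

/-!
Over `F₃`, `x¹¹ - 1 = (x - 1) g₁ g₂` with `g₁ = x⁵ + x⁴ - x³ + x² - 1` and
`g₂ = x⁵ - x³ + x² - x - 1` (the generator polynomials of the ternary Golay code), so an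
irreducible quintic factor `g` is an associate of `g₁` or `g₂`, and the code only depends on
its generator up to associates. If `q h = x^m - 1` with `q`, `h` monic, then
`(q r) mod (x^m - 1) = q (r mod h)`, so the cyclic code generated by `q` is the image of the
encoder `a ↦ q a` on polynomials of degree `< deg h`. For `q = (x - 1) gᵢ` this is a map
`F₃⁵ → F₃¹¹`, and the weights of its `3⁵` codewords are enumerated by kernel computation.
-/

theorem mul_modByMonic_mul {R : Type*} [CommRing R] {q h : R[X]} (r : R[X]) (hq : q.Monic)
    (hh : h.Monic) : (q * r) %ₘ (q * h) = q * (r %ₘ h) := by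
  nontriviality R
  refine (div_modByMonic_unique (r /ₘ h) _ (hq.mul hh)
    ⟨by linear_combination q * modByMonic_add_div r h, ?_⟩).2
  rw [mul_comm q, mul_comm q, hq.degree_mul, hq.degree_mul]
  exact WithBot.add_lt_add_right (degree_eq_natDegree hq.ne_zero ▸ WithBot.coe_ne_bot)
    (degree_modByMonic_lt r hh)

section Encoder

variable {R : Type*} [CommSemiring R]

-- A form of `encoder m k (ofFn n c)` that the kernel can evaluate, unlike polynomial arithmetic.
def mulCoeffs (m : ℕ) {n k : ℕ} (c : Fin n → R) (a : Fin k → R) : Fin m → R :=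
  fun j => ∑ x ∈ antidiagonal (j : ℕ), (List.ofFn c).getD x.1 0 * (List.ofFn a).getD x.2 0

variable [DecidableEq R]

theorem ofFn_toFn_of_degree_lt {n : ℕ} {p : R[X]} (hp : p.degree < n) :
    ofFn n (toFn n p) = p := by
  rcases eq_or_ne p 0 with rfl | hp0
  · simp
  · exact ofFn_comp_toFn_eq_id_of_natDegree_lt ((natDegree_lt_iff_degree_lt hp0).2 hp)

theorem coeff_ofFn (n : ℕ) (v : Fin n → R) (i : ℕ) :
    (ofFn n v).coeff i = (List.ofFn v).getD i 0 := by
  simp [ofFn]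

noncomputable def encoder (m k : ℕ) (q : R[X]) : (Fin k → R) →ₗ[R] Fin m → R :=
  toFn m ∘ₗ LinearMap.mulLeft R q ∘ₗ ofFn k

theorem encoder_ofFn_apply (m : ℕ) {n k : ℕ} (c : Fin n → R) (a : Fin k → R) :
    encoder m k (ofFn n c) a = mulCoeffs m c a := by
  ext j
  simp [encoder, mulCoeffs, toFn, coeff_mul, coeff_ofFn]

end Encoder

theorem natCard_subtype_range_of_injective {R M N : Type*} [Semiring R] [AddCommMonoid M]
    [AddCommMonoid N] [Module R M] [Module R N] {f : M →ₗ[R] N} (hf : Function.Injective f)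
    (P : N → Prop) : Nat.card {c : LinearMap.range f // P c} = Nat.card {a : M // P (f a)} :=
  Nat.card_congr ((LinearEquiv.ofInjective f hf).toEquiv.subtypeEquiv fun _ => Iff.rfl).symm

theorem cyclicCode_le_of_dvd {m : ℕ} {q q' : (ZMod 3)[X]} (h : q ∣ q') :
    cyclicCode m q' ≤ cyclicCode m q := by
  obtain ⟨t, rfl⟩ := h
  refine Submodule.span_mono ?_
  rintro v ⟨r, hr⟩
  exact ⟨t * r, by simpa only [mul_assoc] using hr⟩

theorem cyclicCode_eq_of_associated {m : ℕ} {q q' : (ZMod 3)[X]} (h : Associated q q') :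
    cyclicCode m q = cyclicCode m q' :=
  le_antisymm (cyclicCode_le_of_dvd h.symm.dvd) (cyclicCode_le_of_dvd h.dvd)

theorem cyclicCode_eq_range_encoder {m k : ℕ} {q h : (ZMod 3)[X]} (hq : q.Monic) (hh : h.Monic)
    (hk : h.natDegree = k) (hqh : q * h = X ^ m - 1) :
    cyclicCode m q = LinearMap.range (encoder m k q) := by
  have hred (r : (ZMod 3)[X]) : (q * r) %ₘ (X ^ m - 1) = q * ofFn k (toFn k (r %ₘ h)) := by
    have hdeg : (r %ₘ h).degree < k :=
      hk ▸ degree_eq_natDegree hh.ne_zero ▸ degree_modByMonic_lt r hh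
    rw [← hqh, mul_modByMonic_mul r hq hh, ofFn_toFn_of_degree_lt hdeg]
  rw [cyclicCode, ← Submodule.span_eq (LinearMap.range _)]
  congr 1
  ext v
  constructor
  · rintro ⟨r, hr⟩
    exact ⟨toFn k (r %ₘ h), funext fun i => by rw [hr, hred]; rfl⟩
  · rintro ⟨a, rfl⟩
    refine ⟨ofFn k a, fun i => ?_⟩
    have hdeg : (ofFn k a).degree < h.degree :=
      degree_eq_natDegree hh.ne_zero ▸ hk ▸ ofFn_degree_lt a
    rw [hred, (modByMonic_eq_self_iff hh).2 hdeg, toFn_comp_ofFn_eq_id]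
    rfl

def HasGolayWeightEnumerator (Z : Submodule (ZMod 3) (Fin 11 → ZMod 3)) : Prop :=
  Module.finrank (ZMod 3) Z = 5 ∧
    Nat.card {c : Z // hammingNorm (c : Fin 11 → ZMod 3) = 6} = 132 ∧
    Nat.card {c : Z // hammingNorm (c : Fin 11 → ZMod 3) = 9} = 110 ∧
    ∀ c ∈ Z, c ≠ 0 → hammingNorm c = 6 ∨ hammingNorm c = 9

theorem hasGolayWeightEnumerator_range (f : (Fin 5 → ZMod 3) →ₗ[ZMod 3] Fin 11 → ZMod 3)
    (hw : ∀ a, a ≠ 0 → hammingNorm (f a) = 6 ∨ hammingNorm (f a) = 9)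
    (h6 : Nat.card {a // hammingNorm (f a) = 6} = 132)
    (h9 : Nat.card {a // hammingNorm (f a) = 9} = 110) :
    HasGolayWeightEnumerator (LinearMap.range f) := by
  have hf : Function.Injective f := by
    refine (injective_iff_map_eq_zero f).2 fun a ha => by_contra fun ha0 => ?_
    rcases hw a ha0 with h | h <;> simp [ha] at h
  refine ⟨?_, ?_, ?_, ?_⟩
  · rw [LinearMap.finrank_range_of_inj hf, Module.finrank_fin_fun]
  · exact (natCard_subtype_range_of_injective hf fun c => hammingNorm c = 6).trans h6
  · exact (natCard_subtype_range_of_injective hf fun c => hammingNorm c = 9).trans h9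
  · rintro _ ⟨a, rfl⟩ hne
    exact hw a (by rintro rfl; exact hne (map_zero f))

theorem hasGolayWeightEnumerator_of_factorization {g h : (ZMod 3)[X]} (c : Fin 7 → ZMod 3)
    (hg : g.Monic) (hh : h.Monic) (hk : h.natDegree = 5) (hc : (X - 1) * g = ofFn 7 c)
    (hgh : (X - 1) * g * h = X ^ 11 - 1)
    (hw : ∀ a : Fin 5 → ZMod 3, a ≠ 0 →
      hammingNorm (mulCoeffs 11 c a) = 6 ∨ hammingNorm (mulCoeffs 11 c a) = 9)
    (h6 : Fintype.card {a : Fin 5 → ZMod 3 // hammingNorm (mulCoeffs 11 c a) = 6} = 132)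
    (h9 : Fintype.card {a : Fin 5 → ZMod 3 // hammingNorm (mulCoeffs 11 c a) = 9} = 110) :
    HasGolayWeightEnumerator (cyclicCode 11 ((X - 1) * g)) := by
  rw [cyclicCode_eq_range_encoder ((C_1 (R := ZMod 3) ▸ monic_X_sub_C 1).mul hg) hh hk hgh, hc]
  refine hasGolayWeightEnumerator_range _ ?_ ?_ ?_ <;>
    simp only [encoder_ofFn_apply, Nat.card_eq_fintype_card]
  exacts [hw, h6, h9]

noncomputable def golayPoly₁ : (ZMod 3)[X] := X ^ 5 + X ^ 4 + 2 * X ^ 3 + X ^ 2 + 2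

noncomputable def golayPoly₂ : (ZMod 3)[X] := X ^ 5 + 2 * X ^ 3 + X ^ 2 + 2 * X + 2

theorem golayPoly₁_monic : golayPoly₁.Monic := by unfold golayPoly₁; monicity!

theorem golayPoly₂_monic : golayPoly₂.Monic := by unfold golayPoly₂; monicity!

theorem golayPoly₁_natDegree : golayPoly₁.natDegree = 5 := by unfold golayPoly₁; compute_degree!

theorem golayPoly₂_natDegree : golayPoly₂.natDegree = 5 := by unfold golayPoly₂; compute_degree!

theorem X_pow_eleven_sub_one_eq :
    (X ^ 11 - 1 : (ZMod 3)[X]) = (X - 1) * golayPoly₁ * golayPoly₂ := by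
  unfold golayPoly₁ golayPoly₂; ring_nf; reduce_mod_char

theorem X_sub_one_mul_golayPoly₁ : (X - 1) * golayPoly₁ = ofFn 7 ![1, 2, 2, 2, 1, 0, 1] := by
  simp [ofFn_eq_sum_monomial, Fin.sum_univ_succ, golayPoly₁, ← C_mul_X_pow_eq_monomial, C_ofNat]
  ring_nf; reduce_mod_char; ring

theorem X_sub_one_mul_golayPoly₂ : (X - 1) * golayPoly₂ = ofFn 7 ![1, 0, 1, 2, 2, 2, 1] := by
  simp [ofFn_eq_sum_monomial, Fin.sum_univ_succ, golayPoly₂, ← C_mul_X_pow_eq_monomial, C_ofNat]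
  ring_nf; reduce_mod_char; ring

set_option maxRecDepth 40000 in
theorem hasGolayWeightEnumerator_golayPoly₁ :
    HasGolayWeightEnumerator (cyclicCode 11 ((X - 1) * golayPoly₁)) :=
  hasGolayWeightEnumerator_of_factorization _ golayPoly₁_monic golayPoly₂_monic
    golayPoly₂_natDegree X_sub_one_mul_golayPoly₁ X_pow_eleven_sub_one_eq.symm
    (by decide) (by decide) (by decide)

set_option maxRecDepth 40000 in
theorem hasGolayWeightEnumerator_golayPoly₂ :
    HasGolayWeightEnumerator (cyclicCode 11 ((X - 1) * golayPoly₂)) :=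
  hasGolayWeightEnumerator_of_factorization _ golayPoly₂_monic golayPoly₁_monic
    golayPoly₁_natDegree X_sub_one_mul_golayPoly₂ (by rw [X_pow_eleven_sub_one_eq]; ring)
    (by decide) (by decide) (by decide)

theorem associated_golayPoly_of_irreducible {g : (ZMod 3)[X]} (hirr : Irreducible g)
    (hdeg : g.natDegree = 5) (hdvd : g ∣ X ^ 11 - 1) :
    Associated g golayPoly₁ ∨ Associated g golayPoly₂ := by
  rw [X_pow_eleven_sub_one_eq] at hdvd
  rcases hirr.prime.dvd_or_dvd hdvd with h | h
  · rcases hirr.prime.dvd_or_dvd h with h | h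
    · have := natDegree_le_of_dvd h (X_sub_C_ne_zero 1)
      rw [hdeg, ← C_1, natDegree_X_sub_C] at this
      omega
    · exact .inl (associated_of_dvd_of_natDegree_le h golayPoly₁_monic.ne_zero
        (by rw [golayPoly₁_natDegree, hdeg]))
  · exact .inr (associated_of_dvd_of_natDegree_le h golayPoly₂_monic.ne_zero
      (by rw [golayPoly₂_natDegree, hdeg]))

/-- Let `g` be an irreducible degree-5 factor of `x^11 - 1` over `F₃` and let
`Z ⊆ F₃^11` be the cyclic code with generator polynomial `(x-1)g`.  Then `Z`
has dimension 5, exactly 132 words of weight 6, exactly 110 words of weight 9,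
and no other nonzero words: its weight enumerator is
`x^11 + 132 x^5 y^6 + 110 x^2 y^9`. -/
theorem weight_enumerator_cyclic_code_eleven
    (g : Polynomial (ZMod 3)) (hgirr : Irreducible g) (hgdeg : g.natDegree = 5)
    (hgdvd : g ∣ (X ^ 11 - 1 : Polynomial (ZMod 3))) :
    Module.finrank (ZMod 3) (cyclicCode 11 ((X - 1) * g)) = 5 ∧
    Nat.card {c : cyclicCode 11 ((X - 1) * g) //
      hammingNorm (c : Fin 11 → ZMod 3) = 6} = 132 ∧
    Nat.card {c : cyclicCode 11 ((X - 1) * g) //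
      hammingNorm (c : Fin 11 → ZMod 3) = 9} = 110 ∧
    ∀ c ∈ cyclicCode 11 ((X - 1) * g), c ≠ 0 →
      hammingNorm c = 6 ∨ hammingNorm c = 9 := by
  rcases associated_golayPoly_of_irreducible hgirr hgdeg hgdvd with h | h
  · rw [cyclicCode_eq_of_associated (h.mul_left (X - 1))]
    exact hasGolayWeightEnumerator_golayPoly₁
  · rw [cyclicCode_eq_of_associated (h.mul_left (X - 1))]
    exact hasGolayWeightEnumerator_golayPoly₂
end
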